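/- In the root system B_l with l ≥ 5, if 3 ≤ i then the short root λ_i is not M-equivalent to the long root λ_1 − λ_2: there exists a root γ such that 2⟨γ, λ_i⟩/⟨γ,γ⟩ and 2⟨γ, λ_1 − λ_2⟩/⟨γ,γ⟩ differ by an odd integer. In fact γ = λ_i + λ_k for a suitable k works. -/

import Mathlib

noncomputable section

/-- Standard dot product on `ℝⁿ`. -/
def dotp {n : ℕ} (x y : Fin n → ℝ) : ℝ := ∑ i, x i * y i

/-- Killing number `2⟨γ,α⟩/⟨γ,γ⟩`. -/
def kil {n : ℕ} (γ α : Fin n → ℝ) : ℝ := 2 * dotp γ α / dotp γ γ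

/-- Standard basis vector `λ_a` of `ℝⁿ`. -/
def lamv {n : ℕ} (a : Fin n) : Fin n → ℝ := fun i => if i = a then 1 else 0

/-- Roots of `B_l` in `ℝ^l`: short roots `±λ_a` and long roots `±λ_a ± λ_b`, `a ≠ b`. -/
def rootsB (n : ℕ) : Set (Fin n → ℝ) :=
  {v | (∃ a : Fin n, v = lamv a ∨ v = -lamv a) ∨
       (∃ a b : Fin n, a ≠ b ∧
         (v = lamv a + lamv b ∨ v = lamv a - lamv b ∨ v = -lamv a - lamv b))}

/-!
For `γ = λ_i + λ_k` with `k ∉ {i, 0, 1}` we have `⟨γ, γ⟩ = 2`, so the Killing number of any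
vector `x` against `γ` is `x i + x k`: this is `1` for `λ_i` and `0` for `λ_0 − λ_1`.
-/

theorem Fin.exists_ne_of_four_le {n : ℕ} (hn : 4 ≤ n) (a b c : Fin n) :
    ∃ k : Fin n, k ≠ a ∧ k ≠ b ∧ k ≠ c := by
  have hcard : ({a, b, c} : Finset (Fin n)).card < (Finset.univ : Finset (Fin n)).card := by
    calc ({a, b, c} : Finset (Fin n)).card ≤ 3 := Finset.card_le_three
      _ < n := by omega
      _ = _ := (Finset.card_fin n).symm
  obtain ⟨k, -, hk⟩ := Finset.exists_mem_notMem_of_card_lt_card hcard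
  simp only [Finset.mem_insert, Finset.mem_singleton, not_or] at hk
  exact ⟨k, hk⟩

lemma dotp_lamv_left {n : ℕ} (a : Fin n) (x : Fin n → ℝ) : dotp (lamv a) x = x a := by
  simp [dotp, lamv]

lemma dotp_lamv_add_lamv_left {n : ℕ} (a b : Fin n) (x : Fin n → ℝ) :
    dotp (lamv a + lamv b) x = x a + x b := by
  simp only [dotp, Pi.add_apply, add_mul, Finset.sum_add_distrib]
  rw [← dotp, ← dotp, dotp_lamv_left, dotp_lamv_left]

lemma kil_lamv_add_lamv {n : ℕ} {a b : Fin n} (hab : a ≠ b) (x : Fin n → ℝ) :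
    kil (lamv a + lamv b) x = x a + x b := by
  have hnorm : dotp (lamv a + lamv b) (lamv a + lamv b) = 2 := by
    norm_num [dotp_lamv_add_lamv_left, lamv, hab, hab.symm]
  rw [kil, hnorm, dotp_lamv_add_lamv_left]
  ring

/-- In `B_l`, `l ≥ 5`: for indices `i` with `3 ≤ i` (0-based: `2 ≤ i`), the short
root `λ_i` is not M-equivalent to the long root `λ_1 − λ_2`: some root `γ`, which
may be taken of the form `λ_i + λ_k`, gives Killing numbers differing by an odd
integer. -/
theorem stmt4 {l : ℕ} (hl : 5 ≤ l) (i : Fin l) (hi : 2 ≤ (i : ℕ)) :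
    ∃ γ ∈ rootsB l, (∃ k' : Fin l, k' ≠ i ∧ γ = lamv i + lamv k') ∧
      ∃ k : ℤ,
        kil γ (lamv i) - kil γ (lamv ⟨0, by omega⟩ - lamv ⟨1, by omega⟩) = 2 * k + 1 := by
  set e₀ : Fin l := ⟨0, by omega⟩
  set e₁ : Fin l := ⟨1, by omega⟩
  have hi₀ : i ≠ e₀ := Fin.ne_of_val_ne (by simp only [e₀]; omega)
  have hi₁ : i ≠ e₁ := Fin.ne_of_val_ne (by simp only [e₁]; omega)
  obtain ⟨k, hki, hk₀, hk₁⟩ := Fin.exists_ne_of_four_le (by omega) i e₀ e₁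
  refine ⟨lamv i + lamv k, Or.inr ⟨i, k, hki.symm, Or.inl rfl⟩, ⟨k, hki, rfl⟩, 0, ?_⟩
  rw [kil_lamv_add_lamv hki.symm, kil_lamv_add_lamv hki.symm]
  simp [lamv, hki, hi₀, hi₁, hk₀, hk₁]
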